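/- If p and r are distinct elements of V₂₄ with |p - r| = 1 (i.e., they are endpoints of an edge of the 24-cell with vertices V₂₄), then the quaternion e = p r⁻¹ satisfies e³ = -1. -/

import Mathlib

open Quaternion

noncomputable section

def qi : ℍ[ℝ] := ⟨0, 1, 0, 0⟩
def qj : ℍ[ℝ] := ⟨0, 0, 1, 0⟩
def qk : ℍ[ℝ] := ⟨0, 0, 0, 1⟩

def V8 : Set ℍ[ℝ] := {1, -1, qi, -qi, qj, -qj, qk, -qk}

def V16 : Set ℍ[ℝ] :=
  {q | ∃ a b c d : ℝ, a ∈ ({1, -1} : Set ℝ) ∧ b ∈ ({1, -1} : Set ℝ) ∧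
    c ∈ ({1, -1} : Set ℝ) ∧ d ∈ ({1, -1} : Set ℝ) ∧ q = ⟨a / 2, b / 2, c / 2, d / 2⟩}

def V24 : Set ℍ[ℝ] := V8 ∪ V16

def omg : ℍ[ℝ] := ⟨1 / 2, 1 / 2, 1 / 2, 1 / 2⟩

def V24' : Set ℍ[ℝ] :=
  {q | ∃ x ∈ ({1, qi, qj, qk} : Set ℍ[ℝ]), ∃ y ∈ ({1, qi, qj, qk} : Set ℍ[ℝ]), x ≠ y ∧
    ∃ s t : ℝ, s ∈ ({1, -1} : Set ℝ) ∧ t ∈ ({1, -1} : Set ℝ) ∧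
      q = (Real.sqrt 2)⁻¹ • (s • x + t • y)}

/-! The vertices of the 24-cell are unit quaternions, so `e = p * r⁻¹ = p * star r` is a unit
quaternion with real part `⟪p, r⟫ = (‖p‖² + ‖r‖² - ‖p - r‖²) / 2 = 1 / 2`. A unit quaternion with
real part `1 / 2` satisfies `e² - e + 1 = 0`, and multiplying by `e + 1` gives `e³ = -1`. -/

lemma normSq_eq_one_of_mem_V24 {p : ℍ[ℝ]} (hp : p ∈ V24) : normSq p = 1 := by
  rcases hp with hp | ⟨a, b, c, d, ha, hb, hc, hd, rfl⟩
  · rcases hp with rfl | rfl | rfl | rfl | rfl | rfl | rfl | rfl <;>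
      simp -failIfUnchanged only [normSq_neg, map_one] <;>
      erw [normSq_def'] <;> norm_num [qi, qj, qk]
  · rcases ha with rfl | rfl <;> rcases hb with rfl | rfl <;>
      rcases hc with rfl | rfl <;> rcases hd with rfl | rfl <;>
      · erw [normSq_def']; norm_num

lemma norm_eq_one_of_mem_V24 {p : ℍ[ℝ]} (hp : p ∈ V24) : ‖p‖ = 1 := by
  have h := normSq_eq_norm_mul_self p
  rw [normSq_eq_one_of_mem_V24 hp] at h
  nlinarith [norm_nonneg p]

lemma Quaternion.pow_three_eq_neg_one {R : Type*} [CommRing R] {e : ℍ[R]}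
    (hre : 2 * e.re = 1) (hnormSq : normSq e = 1) : e ^ 3 = -1 := by
  have hchar : e ^ 2 = e - 1 := by
    have h := congrArg (e * ·) (self_add_star' e)
    simp only [mul_add, self_mul_star, hnormSq, hre, coe_one, mul_one] at h
    rw [sq, eq_sub_iff_add_eq]
    exact h
  calc e ^ 3 = e * e ^ 2 := pow_succ' e 2
    _ = e * (e - 1) := by rw [hchar]
    _ = e ^ 2 - e := by rw [mul_sub, mul_one, sq]
    _ = -1 := by rw [hchar]; abel

lemma Quaternion.two_mul_re_mul_inv_eq_one {p r : ℍ[ℝ]} (hp : ‖p‖ = 1) (hr : ‖r‖ = 1)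
    (hpr : ‖p - r‖ = 1) : 2 * (p * r⁻¹).re = 1 := by
  have hnormSq_r : normSq r = 1 := by rw [normSq_eq_norm_mul_self, hr, one_mul]
  have hinner : inner ℝ p r = (p * r⁻¹).re := by
    rw [inner_def, inv_def, hnormSq_r, inv_one, one_smul]
  have h := norm_sub_sq_real p r
  rw [hp, hr, hpr, hinner] at h
  linarith

theorem stmt_12 :
    ∀ p ∈ V24, ∀ r ∈ V24, p ≠ r → ‖p - r‖ = 1 → (p * r⁻¹) ^ 3 = -1 := by
  intro p hp r hr _ hpr
  have hp1 := norm_eq_one_of_mem_V24 hp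
  have hr1 := norm_eq_one_of_mem_V24 hr
  refine Quaternion.pow_three_eq_neg_one (Quaternion.two_mul_re_mul_inv_eq_one hp1 hr1 hpr) ?_
  rw [normSq_eq_norm_mul_self, norm_mul, norm_inv, hp1, hr1]
  norm_num

end
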